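/- Subadditivity of von Neumann entropy: for a bipartite quantum state ρ_{AB} on a finite-dimensional Hilbert space, S(AB) ≤ S(A) + S(B), with equality if and only if ρ_{AB} = ρ_A ⊗ ρ_B. -/

import Mathlib

open scoped Classical ComplexOrder

noncomputable section

/-- Partial trace over the second factor: the reduced state on system `A`. -/
def traceRight {A B : Type*} [Fintype A] [Fintype B]
    (ρ : Matrix (A × B) (A × B) ℂ) : Matrix A A ℂ :=
  fun a a' => ∑ b, ρ (a, b) (a', b)

/-- Partial trace over the first factor: the reduced state on system `B`. -/
def traceLeft {A B : Type*} [Fintype A] [Fintype B]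
    (ρ : Matrix (A × B) (A × B) ℂ) : Matrix B B ℂ :=
  fun b b' => ∑ a, ρ (a, b) (a, b')

/-- Von Neumann entropy `S(ρ) = −∑ λᵢ log λᵢ` in terms of the eigenvalues of a
Hermitian matrix (junk value `0` for non-Hermitian matrices). -/
def vnEntropy {ι : Type*} [Fintype ι] [DecidableEq ι] (ρ : Matrix ι ι ℂ) : ℝ :=
  if h : ρ.IsHermitian then -∑ i, h.eigenvalues i * Real.log (h.eigenvalues i) else 0

end

/-!
Diagonalize `ρ = V diag(p) Vᴴ` and `ρ_A ⊗ ρ_B = W diag(q) Wᴴ`, where `W = U ⊗ U'` and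
`q (a, b) = r a * s b` come from the eigendecompositions of the marginals. Since partial traces
are covariant under `U ⊗ U'`, the diagonal of `ρ` in the basis `W` has marginals `r` and `s`;
with the doubly stochastic weights `P k m = |(Vᴴ W) k m|²` this gives
`S(A) + S(B) - S(AB) = ∑ k m, P k m * kleinTerm (p k) (q m)`, the relative entropy
`D(ρ ‖ ρ_A ⊗ ρ_B)`. Each Klein term `y · klFun (x / y)` is nonnegative and vanishes only for
`x = y`, so the sum vanishes iff `Vᴴ W` intertwines `diag p` and `diag q`, i.e. iff
`ρ = ρ_A ⊗ ρ_B`.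
-/

open Matrix Kronecker Real

theorem Matrix.kronecker_submatrix_swap {A B R : Type*} [CommMagma R] (U : Matrix A A R)
    (U' : Matrix B B R) : (U ⊗ₖ U').submatrix Prod.swap Prod.swap = U' ⊗ₖ U := by
  ext
  exact mul_comm _ _

namespace Matrix.IsHermitian

variable {ι : Type*} [Fintype ι] [DecidableEq ι] {M : Matrix ι ι ℂ}

theorem eq_eigenvectorUnitary_mul_diagonal_mul (hM : M.IsHermitian) :
    M = (hM.eigenvectorUnitary : Matrix ι ι ℂ) * diagonal (fun i => (hM.eigenvalues i : ℂ)) *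
      (hM.eigenvectorUnitary : Matrix ι ι ℂ)ᴴ :=
  hM.spectral_theorem

theorem conjTranspose_eigenvectorUnitary_mul_mul (hM : M.IsHermitian) :
    (hM.eigenvectorUnitary : Matrix ι ι ℂ)ᴴ * M * hM.eigenvectorUnitary =
      diagonal (fun i => (hM.eigenvalues i : ℂ)) := by
  have h := hM.conjStarAlgAut_star_eigenvectorUnitary
  rw [Unitary.conjStarAlgAut_star_apply] at h
  exact h

theorem sum_eigenvalues_eq_one (hM : M.IsHermitian) (htr : M.trace = 1) :
    ∑ i, hM.eigenvalues i = 1 := by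
  have h := hM.trace_eq_sum_eigenvalues
  rw [htr, ← RCLike.ofReal_sum, eq_comm] at h
  exact Complex.ofReal_eq_one.mp h

theorem spectral_theorem_kronecker {κ : Type*} [Fintype κ] [DecidableEq κ] {N : Matrix κ κ ℂ}
    (hM : M.IsHermitian) (hN : N.IsHermitian) :
    M ⊗ₖ N =
      ((hM.eigenvectorUnitary : Matrix ι ι ℂ) ⊗ₖ (hN.eigenvectorUnitary : Matrix κ κ ℂ)) *
        diagonal (fun m => ((hM.eigenvalues m.1 * hN.eigenvalues m.2 : ℝ) : ℂ)) *
        ((hM.eigenvectorUnitary : Matrix ι ι ℂ) ⊗ₖ (hN.eigenvectorUnitary : Matrix κ κ ℂ))ᴴ := by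
  conv_lhs =>
    rw [hM.eq_eigenvectorUnitary_mul_diagonal_mul, hN.eq_eigenvectorUnitary_mul_diagonal_mul]
  rw [mul_kronecker_mul, mul_kronecker_mul, diagonal_kronecker_diagonal, conjTranspose_kronecker]
  simp only [Complex.ofReal_mul]

end Matrix.IsHermitian

theorem vnEntropy_of_isHermitian {ι : Type*} [Fintype ι] [DecidableEq ι] {M : Matrix ι ι ℂ}
    (hM : M.IsHermitian) : vnEntropy M = -∑ i, hM.eigenvalues i * log (hM.eigenvalues i) :=
  dif_pos hM

section PartialTrace

variable {A B : Type*} [Fintype A] [Fintype B]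

theorem traceRight_eq_sum_submatrix (M : Matrix (A × B) (A × B) ℂ) :
    traceRight M = ∑ b, M.submatrix (·, b) (·, b) := by
  ext a a'
  simp [traceRight, Matrix.sum_apply]

theorem traceLeft_eq_traceRight_submatrix_swap (M : Matrix (A × B) (A × B) ℂ) :
    traceLeft M = traceRight (M.submatrix Prod.swap Prod.swap) :=
  rfl

theorem Matrix.PosSemidef.traceRight {M : Matrix (A × B) (A × B) ℂ} (hM : M.PosSemidef) :
    (traceRight M).PosSemidef :=
  traceRight_eq_sum_submatrix M ▸ posSemidef_sum _ fun _ _ => hM.submatrix _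

theorem Matrix.PosSemidef.traceLeft {M : Matrix (A × B) (A × B) ℂ} (hM : M.PosSemidef) :
    (traceLeft M).PosSemidef :=
  (hM.submatrix Prod.swap).traceRight

theorem trace_traceRight (M : Matrix (A × B) (A × B) ℂ) : (traceRight M).trace = M.trace := by
  simp [Matrix.trace, traceRight, Fintype.sum_prod_type]

theorem trace_traceLeft (M : Matrix (A × B) (A × B) ℂ) : (traceLeft M).trace = M.trace := by
  simp only [trace, diag_apply, traceLeft, Fintype.sum_prod_type]
  exact Finset.sum_comm

theorem trace_mul_traceRight [DecidableEq B] (K : Matrix A A ℂ)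
    (M : Matrix (A × B) (A × B) ℂ) :
    (K * traceRight M).trace = ((K ⊗ₖ (1 : Matrix B B ℂ)) * M).trace := by
  simp only [trace, diag_apply, mul_apply, traceRight, Finset.mul_sum, kroneckerMap_apply,
    one_apply, mul_ite, mul_one, mul_zero, ite_mul, zero_mul, Fintype.sum_prod_type,
    Finset.sum_ite_eq, Finset.mem_univ, ↓reduceIte]
  exact Finset.sum_congr rfl fun _ _ => Finset.sum_comm

theorem traceRight_conjTranspose_kronecker_mul_mul [DecidableEq B] (U : Matrix A A ℂ)
    {U' : Matrix B B ℂ} (hU' : U' ∈ unitaryGroup B ℂ) (M : Matrix (A × B) (A × B) ℂ) :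
    traceRight ((U ⊗ₖ U')ᴴ * M * (U ⊗ₖ U')) = Uᴴ * traceRight M * U := by
  have hU'_mul : U' * U'ᴴ = 1 := mem_unitaryGroup_iff.mp hU'
  refine ext_iff_trace_mul_left.mpr fun K => ?_
  calc (K * traceRight ((U ⊗ₖ U')ᴴ * M * (U ⊗ₖ U'))).trace
      = ((U ⊗ₖ U') * (K ⊗ₖ 1) * (U ⊗ₖ U')ᴴ * M).trace := by
        rw [trace_mul_traceRight, ← Matrix.mul_assoc, ← Matrix.mul_assoc, trace_mul_cycle,
          Matrix.mul_assoc _ _ (U ⊗ₖ U')ᴴ]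
    _ = ((U * K * Uᴴ) ⊗ₖ 1 * M).trace := by
        rw [conjTranspose_kronecker, ← mul_kronecker_mul, ← mul_kronecker_mul, Matrix.mul_one,
          hU'_mul]
    _ = (K * (Uᴴ * traceRight M * U)).trace := by
        rw [← trace_mul_traceRight, Matrix.mul_assoc, Matrix.mul_assoc, trace_mul_comm]
        simp only [Matrix.mul_assoc]

theorem traceLeft_conjTranspose_kronecker_mul_mul [DecidableEq A] {U : Matrix A A ℂ}
    (hU : U ∈ unitaryGroup A ℂ) (U' : Matrix B B ℂ) (M : Matrix (A × B) (A × B) ℂ) :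
    traceLeft ((U ⊗ₖ U')ᴴ * M * (U ⊗ₖ U')) = U'ᴴ * traceLeft M * U' := by
  rw [traceLeft_eq_traceRight_submatrix_swap, traceLeft_eq_traceRight_submatrix_swap,
    ← traceRight_conjTranspose_kronecker_mul_mul U' hU, ← kronecker_submatrix_swap,
    conjTranspose_submatrix, ← submatrix_mul_equiv _ _ _ (Equiv.prodComm B A),
    ← submatrix_mul_equiv _ _ _ (Equiv.prodComm B A)]
  simp [submatrix_submatrix]

theorem sum_re_diag_conj_kronecker_right [DecidableEq A] [DecidableEq B]
    {M : Matrix (A × B) (A × B) ℂ} {U : Matrix A A ℂ} {U' : Matrix B B ℂ}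
    (hU' : U' ∈ unitaryGroup B ℂ) {r : A → ℝ}
    (hr : Uᴴ * traceRight M * U = diagonal (fun a => (r a : ℂ))) (a : A) :
    ∑ b, (((U ⊗ₖ U')ᴴ * M * (U ⊗ₖ U')) (a, b) (a, b)).re = r a := by
  rw [← Complex.re_sum]
  change (traceRight ((U ⊗ₖ U')ᴴ * M * (U ⊗ₖ U')) a a).re = r a
  rw [traceRight_conjTranspose_kronecker_mul_mul U hU', hr, diagonal_apply_eq, Complex.ofReal_re]

theorem sum_re_diag_conj_kronecker_left [DecidableEq A] [DecidableEq B]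
    {M : Matrix (A × B) (A × B) ℂ} {U : Matrix A A ℂ} {U' : Matrix B B ℂ}
    (hU : U ∈ unitaryGroup A ℂ) {s : B → ℝ}
    (hs : U'ᴴ * traceLeft M * U' = diagonal (fun b => (s b : ℂ))) (b : B) :
    ∑ a, (((U ⊗ₖ U')ᴴ * M * (U ⊗ₖ U')) (a, b) (a, b)).re = s b := by
  rw [← Complex.re_sum]
  change (traceLeft ((U ⊗ₖ U')ᴴ * M * (U ⊗ₖ U')) b b).re = s b
  rw [traceLeft_conjTranspose_kronecker_mul_mul hU U', hs, diagonal_apply_eq, Complex.ofReal_re]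

end PartialTrace

section Klein

noncomputable def kleinTerm (x y : ℝ) : ℝ := x * log x - x * log y - x + y

theorem kleinTerm_eq_mul_klFun (x : ℝ) {y : ℝ} (hy : 0 < y) :
    kleinTerm x y = y * InformationTheory.klFun (x / y) := by
  rcases eq_or_ne x 0 with rfl | hx
  · simp [kleinTerm, InformationTheory.klFun_zero]
  rw [kleinTerm, InformationTheory.klFun_apply, log_div hx hy.ne']
  field_simp
  ring

theorem kleinTerm_nonneg {x y : ℝ} (hx : 0 ≤ x) (hy : 0 ≤ y) (hxy : y = 0 → x = 0) :
    0 ≤ kleinTerm x y := by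
  rcases hy.eq_or_lt with rfl | hy
  · simp [kleinTerm, hxy rfl]
  rw [kleinTerm_eq_mul_klFun x hy]
  exact mul_nonneg hy.le (InformationTheory.klFun_nonneg (div_nonneg hx hy.le))

theorem kleinTerm_eq_zero_iff {x y : ℝ} (hx : 0 ≤ x) (hy : 0 ≤ y) (hxy : y = 0 → x = 0) :
    kleinTerm x y = 0 ↔ x = y := by
  rcases hy.eq_or_lt with rfl | hy
  · simp [kleinTerm, hxy rfl]
  rw [kleinTerm_eq_mul_klFun x hy, mul_eq_zero_iff_left hy.ne',
    InformationTheory.klFun_eq_zero_iff (div_nonneg hx hy.le), div_eq_one_iff_eq hy.ne']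

variable {ι κ : Type*} [Fintype ι] [Fintype κ]

theorem sum_sum_mul_kleinTerm_eq {P : ι → κ → ℝ} (hrow : ∀ k, ∑ m, P k m = 1)
    (hcol : ∀ m, ∑ k, P k m = 1) (p : ι → ℝ) (q : κ → ℝ) :
    ∑ k, ∑ m, P k m * kleinTerm (p k) (q m) =
      ∑ k, p k * log (p k) - ∑ m, (∑ k, p k * P k m) * log (q m) - ∑ k, p k + ∑ m, q m := by
  have hq : ∑ k, ∑ m, P k m * q m = ∑ m, q m := by
    rw [Finset.sum_comm]
    simp only [← Finset.sum_mul, hcol, one_mul]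
  have hlogq : ∑ k, ∑ m, P k m * (p k * log (q m)) = ∑ m, (∑ k, p k * P k m) * log (q m) := by
    rw [Finset.sum_comm]
    simp only [Finset.sum_mul]
    exact Finset.sum_congr rfl fun _ _ => Finset.sum_congr rfl fun _ _ => by ring
  simp only [kleinTerm, mul_add, mul_sub, Finset.sum_add_distrib, Finset.sum_sub_distrib, hq,
    hlogq, ← Finset.sum_mul, hrow, one_mul]

theorem sum_sum_mul_kleinTerm_nonneg_and_eq_zero_iff {P : ι → κ → ℝ} {p : ι → ℝ}
    {q : κ → ℝ} (hP : ∀ k m, 0 ≤ P k m) (hp : ∀ k, 0 ≤ p k) (hq : ∀ m, 0 ≤ q m)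
    (hsupp : ∀ k m, q m = 0 → P k m * p k = 0) :
    0 ≤ ∑ k, ∑ m, P k m * kleinTerm (p k) (q m) ∧
      (∑ k, ∑ m, P k m * kleinTerm (p k) (q m) = 0 ↔
        ∀ k m, P k m * p k = P k m * q m) := by
  have hsupp' : ∀ k m, P k m ≠ 0 → q m = 0 → p k = 0 := fun k m hPkm hm =>
    (mul_eq_zero.mp (hsupp k m hm)).resolve_left hPkm
  have hterm_nonneg : ∀ k m, 0 ≤ P k m * kleinTerm (p k) (q m) := by
    intro k m
    rcases eq_or_ne (P k m) 0 with hPkm | hPkm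
    · simp [hPkm]
    exact mul_nonneg (hP k m) (kleinTerm_nonneg (hp k) (hq m) (hsupp' k m hPkm))
  have hterm_eq_zero : ∀ k m,
      P k m * kleinTerm (p k) (q m) = 0 ↔ P k m * p k = P k m * q m := by
    intro k m
    rcases eq_or_ne (P k m) 0 with hPkm | hPkm
    · simp [hPkm]
    rw [mul_eq_zero_iff_left hPkm, mul_right_inj' hPkm,
      kleinTerm_eq_zero_iff (hp k) (hq m) (hsupp' k m hPkm)]
  refine ⟨Finset.sum_nonneg fun k _ => Finset.sum_nonneg fun m _ => hterm_nonneg k m, ?_⟩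
  simp only [Finset.sum_eq_zero_iff_of_nonneg fun k _ => Finset.sum_nonneg fun m _ =>
      hterm_nonneg k m, Finset.sum_eq_zero_iff_of_nonneg fun m _ => hterm_nonneg _ m,
    Finset.mem_univ, true_implies, hterm_eq_zero]

variable [DecidableEq ι]

theorem sum_normSq_apply_right {G : Matrix ι ι ℂ} (hG : G ∈ unitaryGroup ι ℂ) (k : ι) :
    ∑ m, Complex.normSq (G k m) = 1 := by
  have h := congrFun₂ (mem_unitaryGroup_iff.mp hG) k k
  simp only [mul_apply, star_apply, Complex.star_def, Complex.mul_conj, one_apply_eq] at h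
  exact_mod_cast h

theorem sum_normSq_apply_left {G : Matrix ι ι ℂ} (hG : G ∈ unitaryGroup ι ℂ) (m : ι) :
    ∑ k, Complex.normSq (G k m) = 1 := by
  have h := congrFun₂ (mem_unitaryGroup_iff'.mp hG) m m
  simp only [mul_apply, star_apply, Complex.star_def, mul_comm ((starRingEnd ℂ) _),
    Complex.mul_conj, one_apply_eq] at h
  exact_mod_cast h

theorem conjTranspose_mul_diagonal_mul_apply_self (G : Matrix ι ι ℂ) (p : ι → ℝ) (m : ι) :
    (Gᴴ * diagonal (fun k => (p k : ℂ)) * G) m m =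
      ((∑ k, p k * Complex.normSq (G k m) : ℝ) : ℂ) := by
  simp only [mul_apply, conjTranspose_apply, diagonal_apply, mul_ite, mul_zero,
    Finset.sum_ite_eq', Finset.mem_univ, if_true]
  push_cast
  refine Finset.sum_congr rfl fun k _ => ?_
  rw [Complex.normSq_eq_conj_mul_self, Complex.star_def]
  ring

theorem conj_eq_conj_iff {V W X Y : Matrix ι ι ℂ} (hV : V ∈ unitaryGroup ι ℂ)
    (hW : W ∈ unitaryGroup ι ℂ) : V * X * Vᴴ = W * Y * Wᴴ ↔ X * (Vᴴ * W) = Vᴴ * W * Y := by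
  have hVV : Vᴴ * V = 1 := mem_unitaryGroup_iff'.mp hV
  have hVV' : V * Vᴴ = 1 := mem_unitaryGroup_iff.mp hV
  have hWW : Wᴴ * W = 1 := mem_unitaryGroup_iff'.mp hW
  have hWW' : W * Wᴴ = 1 := mem_unitaryGroup_iff.mp hW
  constructor
  · intro h
    calc X * (Vᴴ * W) = Vᴴ * (V * X * Vᴴ) * W := by
          simp only [Matrix.mul_assoc, ← Matrix.mul_assoc Vᴴ V, hVV, Matrix.one_mul]
      _ = Vᴴ * W * Y := by rw [h]; simp only [Matrix.mul_assoc, hWW, Matrix.mul_one]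
  · intro h
    calc V * X * Vᴴ = V * (X * (Vᴴ * W)) * Wᴴ := by
          simp only [Matrix.mul_assoc, hWW', Matrix.mul_one]
      _ = W * Y * Wᴴ := by rw [h]; simp only [← Matrix.mul_assoc, hVV', Matrix.one_mul]

theorem conj_diagonal_eq_conj_diagonal_iff {V W : Matrix ι ι ℂ} (hV : V ∈ unitaryGroup ι ℂ)
    (hW : W ∈ unitaryGroup ι ℂ) (p q : ι → ℝ) :
    V * diagonal (fun k => (p k : ℂ)) * Vᴴ = W * diagonal (fun m => (q m : ℂ)) * Wᴴ ↔
      ∀ k m, Complex.normSq ((Vᴴ * W) k m) * p k = Complex.normSq ((Vᴴ * W) k m) * q m := by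
  rw [conj_eq_conj_iff hV hW, ← Matrix.ext_iff]
  simp only [diagonal_mul, mul_diagonal]
  refine forall₂_congr fun k m => ?_
  rw [mul_comm (p k : ℂ), mul_eq_mul_left_iff, mul_eq_mul_left_iff, Complex.ofReal_inj,
    Complex.normSq_eq_zero]

/-- In the eigenbases `V` of `ρ` and `W` of `σ`, the quantity below is
`tr ρ (log ρ - log σ) - tr ρ + tr σ`, and `hsupp` is the support condition `ker σ ⊆ ker ρ`. -/
theorem klein_inequality {ρ σ V W : Matrix ι ι ℂ} {p q : ι → ℝ} (hV : V ∈ unitaryGroup ι ℂ)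
    (hW : W ∈ unitaryGroup ι ℂ) (hp : ∀ k, 0 ≤ p k) (hq : ∀ m, 0 ≤ q m)
    (hρ : ρ = V * diagonal (fun k => (p k : ℂ)) * Vᴴ)
    (hσ : σ = W * diagonal (fun m => (q m : ℂ)) * Wᴴ)
    (hsupp : ∀ m, q m = 0 → ((Wᴴ * ρ * W) m m).re = 0) :
    0 ≤ ∑ k, p k * log (p k) - ∑ m, ((Wᴴ * ρ * W) m m).re * log (q m) - ∑ k, p k + ∑ m, q m ∧
      (∑ k, p k * log (p k) - ∑ m, ((Wᴴ * ρ * W) m m).re * log (q m) - ∑ k, p k + ∑ m, q m = 0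
        ↔ ρ = σ) := by
  have hG : Vᴴ * W ∈ unitaryGroup ι ℂ := Submonoid.mul_mem _ (Unitary.star_mem hV) hW
  have hdiag : ∀ m, ((Wᴴ * ρ * W) m m).re = ∑ k, p k * Complex.normSq ((Vᴴ * W) k m) :=
    fun m => by
      rw [← Complex.ofReal_re (∑ k, _), ← conjTranspose_mul_diagonal_mul_apply_self, hρ,
        conjTranspose_mul, conjTranspose_conjTranspose]
      simp only [Matrix.mul_assoc]
  have hsupp' : ∀ k m, q m = 0 → Complex.normSq ((Vᴴ * W) k m) * p k = 0 := fun k m hm => by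
    rw [mul_comm]
    exact (Finset.sum_eq_zero_iff_of_nonneg fun k _ =>
      mul_nonneg (hp k) (Complex.normSq_nonneg _)).mp ((hdiag m).symm.trans (hsupp m hm)) k
      (Finset.mem_univ k)
  simp only [hdiag]
  rw [← sum_sum_mul_kleinTerm_eq (sum_normSq_apply_right hG) (sum_normSq_apply_left hG), hσ, hρ,
    conj_diagonal_eq_conj_diagonal_iff hV hW]
  exact sum_sum_mul_kleinTerm_nonneg_and_eq_zero_iff (fun _ _ => Complex.normSq_nonneg _) hp hq
    hsupp'

end Klein

section Coupling

variable {A B : Type*} [Fintype A] [Fintype B] {c : A × B → ℝ} {r : A → ℝ} {s : B → ℝ}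

theorem eq_zero_of_marginal_mul_eq_zero (hc : ∀ m, 0 ≤ c m) (hr : ∀ a, ∑ b, c (a, b) = r a)
    (hs : ∀ b, ∑ a, c (a, b) = s b) {m : A × B} (hm : r m.1 * s m.2 = 0) : c m = 0 := by
  obtain ⟨a, b⟩ := m
  rcases mul_eq_zero.mp hm with h | h
  · exact (Finset.sum_eq_zero_iff_of_nonneg fun b _ => hc (a, b)).mp ((hr a).trans h) b
      (Finset.mem_univ b)
  · exact (Finset.sum_eq_zero_iff_of_nonneg fun a _ => hc (a, b)).mp ((hs b).trans h) a
      (Finset.mem_univ a)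

theorem sum_mul_log_marginal_mul (hc : ∀ m, 0 ≤ c m) (hr : ∀ a, ∑ b, c (a, b) = r a)
    (hs : ∀ b, ∑ a, c (a, b) = s b) :
    ∑ m, c m * log (r m.1 * s m.2) = ∑ a, r a * log (r a) + ∑ b, s b * log (s b) := by
  have hsplit : ∀ m, c m * log (r m.1 * s m.2) = c m * log (r m.1) + c m * log (s m.2) := by
    intro m
    by_cases hm : r m.1 * s m.2 = 0
    · simp [eq_zero_of_marginal_mul_eq_zero hc hr hs hm]
    rw [log_mul (left_ne_zero_of_mul hm) (right_ne_zero_of_mul hm), mul_add]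
  simp only [hsplit, Finset.sum_add_distrib, Fintype.sum_prod_type]
  rw [Finset.sum_comm (f := fun a b => c (a, b) * log (s b))]
  simp only [← Finset.sum_mul, hr, hs]

end Coupling

open Kronecker in
/-- subadditivity of von Neumann entropy, with equality iff the
state is a product of its marginals. -/
theorem entropy_subadditivity {A B : Type*}
    [Fintype A] [Fintype B] [DecidableEq A] [DecidableEq B]
    (ρ : Matrix (A × B) (A × B) ℂ)
    (hpos : ρ.PosSemidef) (htr : ρ.trace = 1) :
    vnEntropy ρ ≤ vnEntropy (traceRight ρ) + vnEntropy (traceLeft ρ) ∧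
      (vnEntropy ρ = vnEntropy (traceRight ρ) + vnEntropy (traceLeft ρ) ↔
        ρ = traceRight ρ ⊗ₖ traceLeft ρ) := by
  have hρ := hpos.isHermitian
  have hρA := hpos.traceRight.isHermitian
  have hρB := hpos.traceLeft.isHermitian
  set U := hρA.eigenvectorUnitary
  set U' := hρB.eigenvectorUnitary
  set W : Matrix (A × B) (A × B) ℂ := (U : Matrix A A ℂ) ⊗ₖ (U' : Matrix B B ℂ)
  set c : A × B → ℝ := fun m => ((Wᴴ * ρ * W) m m).re
  have hc : ∀ m, 0 ≤ c m := fun m =>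
    (Complex.nonneg_iff.mp (hpos.conjTranspose_mul_mul_same W).diag_nonneg).1
  have hcA := sum_re_diag_conj_kronecker_right U'.2 hρA.conjTranspose_eigenvectorUnitary_mul_mul
  have hcB := sum_re_diag_conj_kronecker_left U.2 hρB.conjTranspose_eigenvectorUnitary_mul_mul
  have hsum_q : ∑ m : A × B, hρA.eigenvalues m.1 * hρB.eigenvalues m.2 = 1 := by
    rw [Fintype.sum_prod_type, ← Finset.sum_mul_sum,
      hρA.sum_eigenvalues_eq_one (by rw [trace_traceRight, htr]),
      hρB.sum_eigenvalues_eq_one (by rw [trace_traceLeft, htr]), mul_one]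
  obtain ⟨hle, heq⟩ := klein_inequality hρ.eigenvectorUnitary.2
    (kronecker_mem_unitary U.2 U'.2) hpos.eigenvalues_nonneg
    (fun m => mul_nonneg (hpos.traceRight.eigenvalues_nonneg m.1)
      (hpos.traceLeft.eigenvalues_nonneg m.2))
    hρ.eq_eigenvectorUnitary_mul_diagonal_mul (hρA.spectral_theorem_kronecker hρB)
    (fun m => eq_zero_of_marginal_mul_eq_zero hc hcA hcB)
  rw [sum_mul_log_marginal_mul hc hcA hcB, hρ.sum_eigenvalues_eq_one htr, hsum_q] at hle heq
  rw [vnEntropy_of_isHermitian hρ, vnEntropy_of_isHermitian hρA, vnEntropy_of_isHermitian hρB,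
    ← heq]
  exact ⟨by linarith, by constructor <;> intro h <;> linarith⟩
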